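/- arXiv:2308.07343 — 3 statements merged into one kernel-verified Lean document; each statement's English description precedes it below -/
import Mathlib

section
/- Let f : ℝᵈ → ℝ be convex differentiable with L-Lipschitz gradient, K a convex cone, and x* a minimizer of f over K with ‖x*‖ = R. If a point z ∈ K satisfies ⟪∇f(z), z⟫ = 0 and f(z) - f(x*) ≤ ε, then ‖∇f(z) - ∇f(x*)‖² ≤ 2Lε; consequently the distance of ∇f(z) to the dual cone K* satisfies dist(∇f(z), K*)² ≤ 2Lε. -/
open RealInnerProductSpace Set

/-!
At a minimiser `x⋆` of a convex `f` over a convex cone `K`, the first-order condition gives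
`⟪∇f x⋆, y - x⋆⟫ ≥ 0` for every `y ∈ K`, and in particular `∇f x⋆ ∈ K*`. Combining the descent
lemma at `z` with the subgradient inequality at `x⋆`, evaluated at the gradient step
`z - L⁻¹ (∇f z - ∇f x⋆)`, gives the co-coercivity bound
`‖∇f z - ∇f x⋆‖² ≤ 2L (f z - f x⋆ - ⟪∇f x⋆, z - x⋆⟫) ≤ 2Lε`.
The distance from `∇f z` to `K*` is at most its distance to `∇f x⋆`.
-/

section

variable {E : Type*} [NormedAddCommGroup E] [InnerProductSpace ℝ E] [CompleteSpace E]
  {f : E → ℝ}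

lemma hasDerivAt_comp_add_smul {x v : E} {t : ℝ} (hf : DifferentiableAt ℝ f (x + t • v)) :
    HasDerivAt (fun s : ℝ => f (x + s • v)) ⟪gradient f (x + t • v), v⟫ t := by
  have hline : HasDerivAt (fun s : ℝ => x + s • v) v t := by
    simpa using ((hasDerivAt_id t).smul_const v).const_add x
  exact (hf.hasGradientAt.hasFDerivAt.comp_hasDerivAt t hline).congr_deriv (by simp)

lemma ConvexOn.add_inner_gradient_le (hconv : ConvexOn ℝ univ f) (hdiff : Differentiable ℝ f)
    (x y : E) : f x + ⟪gradient f x, y - x⟫ ≤ f y := by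
  have hline : ConvexOn ℝ univ (fun t : ℝ => f (x + t • (y - x))) := by
    simpa [Function.comp_def, AffineMap.lineMap_apply, add_comm] using
      hconv.comp_affineMap (AffineMap.lineMap x y)
  have hderiv : HasDerivAt (fun t : ℝ => f (x + t • (y - x))) ⟪gradient f x, y - x⟫ 0 := by
    simpa only [zero_smul, add_zero] using
      hasDerivAt_comp_add_smul (x := x) (v := y - x) (t := 0) (hdiff _)
  have := hline.le_slope_of_hasDerivAt (mem_univ 0) (mem_univ 1) zero_lt_one hderiv
  simp only [slope_def_field, one_smul, zero_smul, add_zero, add_sub_cancel, sub_zero,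
    div_one] at this
  linarith

lemma le_add_inner_gradient_add_sq_of_lipschitz_gradient (hdiff : Differentiable ℝ f) {L : ℝ}
    (hLip : ∀ x y, ‖gradient f x - gradient f y‖ ≤ L * ‖x - y‖) (x v : E) :
    f (x + v) ≤ f x + ⟪gradient f x, v⟫ + L / 2 * ‖v‖ ^ 2 := by
  set φ : ℝ → ℝ := fun t => f (x + t • v) - t * ⟪gradient f x, v⟫
  have hφ : ∀ t, HasDerivAt φ (⟪gradient f (x + t • v), v⟫ - ⟪gradient f x, v⟫) t := fun t =>
    (hasDerivAt_comp_add_smul (hdiff _)).sub (by simpa using (hasDerivAt_id t).mul_const _)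
  have hB : ∀ t, HasDerivAt (fun t : ℝ => f x + L / 2 * ‖v‖ ^ 2 * t ^ 2) (L * ‖v‖ ^ 2 * t) t :=
    fun t => (((hasDerivAt_pow 2 t).const_mul (L / 2 * ‖v‖ ^ 2)).const_add (f x)).congr_deriv
      (by push_cast; ring)
  have hbound : ∀ t ∈ Ico (0 : ℝ) 1,
      ⟪gradient f (x + t • v), v⟫ - ⟪gradient f x, v⟫ ≤ L * ‖v‖ ^ 2 * t := by
    rintro t ⟨ht, -⟩
    calc ⟪gradient f (x + t • v), v⟫ - ⟪gradient f x, v⟫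
        = ⟪gradient f (x + t • v) - gradient f x, v⟫ := (inner_sub_left _ _ _).symm
      _ ≤ ‖gradient f (x + t • v) - gradient f x‖ * ‖v‖ := real_inner_le_norm _ _
      _ ≤ L * ‖(x + t • v) - x‖ * ‖v‖ := by gcongr; exact hLip _ _
      _ = L * ‖v‖ ^ 2 * t := by
        rw [add_sub_cancel_left, norm_smul, Real.norm_of_nonneg ht]; ring
  have := image_le_of_deriv_right_le_deriv_boundary
    (fun t _ => (hφ t).continuousAt.continuousWithinAt)
    (fun t _ => (hφ t).hasDerivWithinAt) (by simp [φ])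
    (fun t _ => (hB t).continuousAt.continuousWithinAt)
    (fun t _ => (hB t).hasDerivWithinAt) hbound (right_mem_Icc.mpr zero_le_one)
  simp only [φ, one_smul, one_mul, one_pow, mul_one] at this
  linarith

lemma sq_norm_gradient_sub_le_of_lipschitz_gradient (hconv : ConvexOn ℝ univ f)
    (hdiff : Differentiable ℝ f) {L : ℝ} (hL : 0 < L)
    (hLip : ∀ x y, ‖gradient f x - gradient f y‖ ≤ L * ‖x - y‖) (x y : E) :
    ‖gradient f y - gradient f x‖ ^ 2 ≤ 2 * L * (f y - f x - ⟪gradient f x, y - x⟫) := by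
  set g := gradient f y - gradient f x
  have hdescent := le_add_inner_gradient_add_sq_of_lipschitz_gradient hdiff hLip y (-L⁻¹ • g)
  have hsubgrad := hconv.add_inner_gradient_le hdiff x (y + -L⁻¹ • g)
  have hstep : y + -L⁻¹ • g - x = (y - x) + -L⁻¹ • g := by abel
  rw [hstep, inner_add_right] at hsubgrad
  have hcross : ⟪gradient f y, -L⁻¹ • g⟫ - ⟪gradient f x, -L⁻¹ • g⟫ = -L⁻¹ * ‖g‖ ^ 2 := by
    rw [← inner_sub_left, real_inner_smul_right, real_inner_self_eq_norm_sq]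
  have hsq : ‖-L⁻¹ • g‖ ^ 2 = L⁻¹ ^ 2 * ‖g‖ ^ 2 := by
    rw [norm_smul, mul_pow, norm_neg, Real.norm_of_nonneg (inv_nonneg.mpr hL.le)]
  rw [hsq] at hdescent
  have key : L⁻¹ / 2 * ‖g‖ ^ 2 ≤ f y - f x - ⟪gradient f x, y - x⟫ := by
    have : L / 2 * (L⁻¹ ^ 2 * ‖g‖ ^ 2) = L⁻¹ / 2 * ‖g‖ ^ 2 := by field_simp
    linarith
  calc ‖g‖ ^ 2 = 2 * L * (L⁻¹ / 2 * ‖g‖ ^ 2) := by field_simp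
    _ ≤ _ := by gcongr

lemma IsMinOn.inner_gradient_sub_nonneg {s : Set E} (hs : Convex ℝ s) {a y : E}
    (hmin : IsMinOn f s a) (hf : DifferentiableAt ℝ f a) (ha : a ∈ s) (hy : y ∈ s) :
    0 ≤ ⟪gradient f a, y - a⟫ := by
  have := hmin.localize.hasFDerivWithinAt_nonneg hf.hasGradientAt.hasFDerivAt.hasFDerivWithinAt
    (sub_mem_posTangentConeAt_of_segment_subset (hs.segment_subset ha hy))
  simpa using this

end

theorem stmt3_general {d : ℕ} (K : Set (EuclideanSpace ℝ (Fin d)))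
    (f : EuclideanSpace ℝ (Fin d) → ℝ)
    (hKsmul : ∀ (c : ℝ), 0 ≤ c → ∀ x ∈ K, c • x ∈ K)
    (hKadd : ∀ x ∈ K, ∀ y ∈ K, x + y ∈ K)
    (hconv : ConvexOn ℝ Set.univ f)
    (hdiff : Differentiable ℝ f)
    (L : ℝ) (hL : 0 < L)
    (hLip : ∀ x y, ‖gradient f x - gradient f y‖ ≤ L * ‖x - y‖)
    (xstar : EuclideanSpace ℝ (Fin d)) (hxstar : xstar ∈ K)
    (hmin : ∀ x ∈ K, f xstar ≤ f x)
    (z : EuclideanSpace ℝ (Fin d)) (hz : z ∈ K)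
    (ε : ℝ) (hε : f z - f xstar ≤ ε) :
    ‖gradient f z - gradient f xstar‖ ^ 2 ≤ 2 * L * ε ∧
    (Metric.infDist (gradient f z) {u | ∀ x ∈ K, 0 ≤ ⟪u, x⟫}) ^ 2 ≤ 2 * L * ε := by
  have hKconv : Convex ℝ K := fun a ha b hb s t hs ht _ =>
    hKadd _ (hKsmul s hs a ha) _ (hKsmul t ht b hb)
  have hopt : ∀ y ∈ K, 0 ≤ ⟪gradient f xstar, y - xstar⟫ := fun y hy =>
    IsMinOn.inner_gradient_sub_nonneg hKconv hmin (hdiff xstar) hxstar hy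
  have hdual : gradient f xstar ∈ {u | ∀ x ∈ K, 0 ≤ ⟪u, x⟫} := fun x hx => by
    simpa using hopt (xstar + x) (hKadd _ hxstar _ hx)
  have hnorm : ‖gradient f z - gradient f xstar‖ ^ 2 ≤ 2 * L * ε :=
    (sq_norm_gradient_sub_le_of_lipschitz_gradient hconv hdiff hL hLip xstar z).trans
      (by nlinarith [hopt z hz])
  refine ⟨hnorm, le_trans ?_ hnorm⟩
  have := Metric.infDist_le_dist_of_mem hdual (x := gradient f z)
  rw [dist_eq_norm] at this
  exact pow_le_pow_left₀ Metric.infDist_nonneg this 2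

theorem stmt3 {d : ℕ} (K : Set (EuclideanSpace ℝ (Fin d)))
    (f : EuclideanSpace ℝ (Fin d) → ℝ)
    (hKsmul : ∀ (c : ℝ), 0 ≤ c → ∀ x ∈ K, c • x ∈ K)
    (hKadd : ∀ x ∈ K, ∀ y ∈ K, x + y ∈ K)
    (hconv : ConvexOn ℝ Set.univ f)
    (hdiff : Differentiable ℝ f)
    (L : ℝ) (hL : 0 < L)
    (hLip : ∀ x y, ‖gradient f x - gradient f y‖ ≤ L * ‖x - y‖)
    (xstar : EuclideanSpace ℝ (Fin d)) (hxstar : xstar ∈ K)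
    (hmin : ∀ x ∈ K, f xstar ≤ f x)
    (R : ℝ) (hR : ‖xstar‖ = R)
    (z : EuclideanSpace ℝ (Fin d)) (hz : z ∈ K)
    (hslack : ⟪gradient f z, z⟫ = 0)
    (ε : ℝ) (hε : f z - f xstar ≤ ε) :
    ‖gradient f z - gradient f xstar‖ ^ 2 ≤ 2 * L * ε ∧
    (Metric.infDist (gradient f z) {u | ∀ x ∈ K, 0 ≤ ⟪u, x⟫}) ^ 2 ≤ 2 * L * ε :=
  stmt3_general K f hKsmul hKadd hconv hdiff L hL hLip xstar hxstar hmin z hz ε hε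
end

section
/- Let (z_k) be a sequence of nonnegative reals satisfying z_{k+1} ≤ (1 - δ_k) z_k + (C/2) δ_k² for all k ≥ 0, where δ_k = 2/(k+2) and C > 0. Then z_{k+1} ≤ 2C/(k+2) for all k ≥ 0. -/
theorem stmt4 (C : ℝ) (hC : 0 < C) (z : ℕ → ℝ)
    (hz : ∀ k, 0 ≤ z k)
    (hrec : ∀ k : ℕ, z (k + 1) ≤ (1 - 2 / ((k : ℝ) + 2)) * z k + (C / 2) * (2 / ((k : ℝ) + 2)) ^ 2) :
    ∀ k : ℕ, z (k + 1) ≤ 2 * C / ((k : ℝ) + 2) := by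
  intro k
  induction k with
  | zero =>
    have h := hrec 0
    norm_num at h ⊢
    linarith
  | succ n ih =>
    have h := hrec (n + 1)
    push_cast at h ⊢
    have hn2 : (0:ℝ) < (n:ℝ) + 2 := by positivity
    have hn3 : (0:ℝ) < (n:ℝ) + 3 := by positivity
    have hcoef : (0:ℝ) ≤ 1 - 2 / ((n:ℝ) + 1 + 2) := by
      rw [sub_nonneg, div_le_one (by linarith)]; linarith
    have h2 : (1 - 2 / ((n:ℝ) + 1 + 2)) * z (n + 1) ≤
        (1 - 2 / ((n:ℝ) + 1 + 2)) * (2 * C / ((n:ℝ) + 2)) :=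
      mul_le_mul_of_nonneg_left ih hcoef
    have key : (1 - 2 / ((n:ℝ) + 1 + 2)) * (2 * C / ((n:ℝ) + 2))
        + C / 2 * (2 / ((n:ℝ) + 1 + 2)) ^ 2 ≤ 2 * C / ((n:ℝ) + 1 + 2) := by
      rw [show ((n:ℝ)+1+2) = (n:ℝ)+3 from by ring]
      have expand : 2 * C / ((n:ℝ) + 3) -
          ((1 - 2 / ((n:ℝ) + 3)) * (2 * C / ((n:ℝ) + 2)) + C / 2 * (2 / ((n:ℝ) + 3)) ^ 2)
          = 2 * C / (((n:ℝ) + 3) ^ 2 * ((n:ℝ) + 2)) := by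
        field_simp
        ring
      have hpos : 0 ≤ 2 * C / (((n:ℝ) + 3) ^ 2 * ((n:ℝ) + 2)) := by positivity
      linarith
    linarith
end

section
/- Let K ⊆ ℝᵈ be a closed convex cone and g ∈ ℝᵈ. Then min over {v ∈ K, ‖v‖₂ ≤ 1} of ⟪g, v⟫ equals −dist(g, K*), where K* is the dual cone and dist is Euclidean distance. Equivalently, the optimal value of the linear minimization over the unit-ball-intersected cone equals minus the distance of g to the dual cone. -/
/-!
Let `p` be the projection of `-g` onto `K`. Since `K` is a cone, the variational inequality of the
projection gives `⟪g + p, p⟫ = 0` and `g + p ∈ K*` (Moreau's decomposition `g = (g + p) - p`).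
Hence `dist(g, K*) ≤ ‖p‖`, and the unit vector `p / ‖p‖ ∈ K` has `⟪g, p / ‖p‖⟫ = -‖p‖`. Conversely,
for `v ∈ K` with `‖v‖ ≤ 1` and any `u ∈ K*`, `⟪g, v⟫ ≥ ⟪g - u, v⟫ ≥ -‖g - u‖` (weak duality), so
both values equal `-‖p‖`.
-/

open RealInnerProductSpace

section ConeDuality

variable {E : Type*} [NormedAddCommGroup E] [InnerProductSpace ℝ E] {K : Set E}

theorem neg_infDist_dual_le_inner (g : E) {v : E} (hvK : v ∈ K) (hv : ‖v‖ ≤ 1) :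
    -Metric.infDist g {u | ∀ x ∈ K, 0 ≤ ⟪u, x⟫} ≤ ⟪g, v⟫ := by
  have hne : ({u | ∀ x ∈ K, 0 ≤ ⟪u, x⟫} : Set E).Nonempty := ⟨0, fun x _ => (inner_zero_left x).ge⟩
  rw [neg_le, Metric.le_infDist hne]
  intro u hu
  calc -⟪g, v⟫ ≤ ⟪u, v⟫ - ⟪g, v⟫ := by linarith [hu v hvK]
    _ = ⟪u - g, v⟫ := (inner_sub_left u g v).symm
    _ ≤ ‖u - g‖ * ‖v‖ := real_inner_le_norm _ _
    _ ≤ ‖u - g‖ := mul_le_of_le_one_right (norm_nonneg _) hv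
    _ = dist g u := (dist_eq_norm' g u).symm

theorem exists_mem_add_mem_dual_inner_eq_zero (hK : IsComplete K) (hconv : Convex ℝ K)
    (hcone : ∀ c : ℝ, 0 ≤ c → ∀ x ∈ K, c • x ∈ K) (h0 : (0 : E) ∈ K) (g : E) :
    ∃ p ∈ K, ⟪g + p, p⟫ = 0 ∧ ∀ x ∈ K, 0 ≤ ⟪g + p, x⟫ := by
  obtain ⟨p, hpK, hproj⟩ := exists_norm_eq_iInf_of_complete_convex ⟨0, h0⟩ hK hconv (-g)
  have hvar : ∀ x ∈ K, 0 ≤ ⟪g + p, x - p⟫ := by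
    intro x hx
    have := (norm_eq_iInf_iff_real_inner_le_zero hconv hpK).mp hproj x hx
    rwa [show -g - p = -(g + p) by abel, inner_neg_left, neg_nonpos] at this
  have horth : ⟪g + p, p⟫ = 0 := by
    have h_zero := hvar 0 h0
    have h_two := hvar ((2 : ℝ) • p) (hcone 2 zero_le_two p hpK)
    rw [zero_sub, inner_neg_right] at h_zero
    rw [show (2 : ℝ) • p - p = p by module] at h_two
    linarith
  refine ⟨p, hpK, horth, fun x hx => ?_⟩
  have := hvar x hx
  rwa [inner_sub_right, horth, sub_zero] at this

theorem inv_norm_smul_mem_inner_eq_neg_norm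
    (hcone : ∀ c : ℝ, 0 ≤ c → ∀ x ∈ K, c • x ∈ K) {g p : E} (hpK : p ∈ K)
    (horth : ⟪g + p, p⟫ = 0) :
    ‖p‖⁻¹ • p ∈ K ∧ ‖‖p‖⁻¹ • p‖ ≤ 1 ∧ ⟪g, ‖p‖⁻¹ • p⟫ = -‖p‖ := by
  refine ⟨hcone _ (inv_nonneg.mpr (norm_nonneg p)) p hpK, ?_, ?_⟩
  · rw [norm_smul, norm_inv, norm_norm]
    exact inv_mul_le_one_of_le₀ le_rfl (norm_nonneg p)
  · have hgp : ⟪g, p⟫ = -‖p‖ ^ 2 := by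
      rw [inner_add_left, real_inner_self_eq_norm_sq] at horth
      linarith
    rw [real_inner_smul_right, hgp]
    rcases eq_or_ne ‖p‖ 0 with hp | hp
    · simp [hp]
    · field_simp

theorem infDist_dual_eq_norm (hcone : ∀ c : ℝ, 0 ≤ c → ∀ x ∈ K, c • x ∈ K) {g p : E}
    (hpK : p ∈ K) (horth : ⟪g + p, p⟫ = 0) (hdual : ∀ x ∈ K, 0 ≤ ⟪g + p, x⟫) :
    Metric.infDist g {u | ∀ x ∈ K, 0 ≤ ⟪u, x⟫} = ‖p‖ := by
  apply le_antisymm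
  · calc Metric.infDist g {u | ∀ x ∈ K, 0 ≤ ⟪u, x⟫} ≤ dist g (g + p) :=
          Metric.infDist_le_dist_of_mem hdual
      _ = ‖p‖ := by rw [dist_eq_norm, sub_add_cancel_left, norm_neg]
  · obtain ⟨hvK, hv, hgv⟩ := inv_norm_smul_mem_inner_eq_neg_norm hcone hpK horth
    have := neg_infDist_dual_le_inner g hvK hv
    linarith

end ConeDuality

theorem stmt15 {d : ℕ} (K : Set (EuclideanSpace ℝ (Fin d)))
    (hclosed : IsClosed K) (hconv : Convex ℝ K)
    (hcone : ∀ (c : ℝ), 0 ≤ c → ∀ x ∈ K, c • x ∈ K)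
    (h0 : (0 : EuclideanSpace ℝ (Fin d)) ∈ K)
    (g : EuclideanSpace ℝ (Fin d)) :
    sInf ((fun v => ⟪g, v⟫) '' {v | v ∈ K ∧ ‖v‖ ≤ 1})
      = - Metric.infDist g {u | ∀ x ∈ K, 0 ≤ ⟪u, x⟫} := by
  obtain ⟨p, hpK, horth, hdual⟩ :=
    exists_mem_add_mem_dual_inner_eq_zero hclosed.isComplete hconv hcone h0 g
  obtain ⟨hvK, hv, hgv⟩ := inv_norm_smul_mem_inner_eq_neg_norm hcone hpK horth
  refine IsLeast.csInf_eq ⟨⟨_, ⟨hvK, hv⟩, ?_⟩, ?_⟩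
  · rw [infDist_dual_eq_norm hcone hpK horth hdual]
    exact hgv
  · rintro _ ⟨v, ⟨hvK, hv⟩, rfl⟩
    exact neg_infDist_dual_le_inner g hvK hv
end
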